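/- Suppose φ : ℝ → ℝ is even, continuous, integrable, φ(0) = 1, and its Fourier transform φ̂ is nonnegative, integrable, and real-analytic on ℝ. Let λ > 0 and let n be a positive integer. If 0 < r ≤ π/(2λ), then min( ∫_{-r}^{r} (P̂_n(λ, ·))₋(ω) dω , ∫_{-r}^{r} (P̂_n(λ, ·))₊(ω) dω ) ≤ 4√(2π) · Σ_{k>n} |a_k|. -/

import Mathlib

open MeasureTheory Real

/-- Fourier transform normalized as `f̂(ω) = (1/√(2π)) ∫ f(x) e^{-iωx} dx`. -/
noncomputable def FT (f : ℝ → ℝ) (w : ℝ) : ℂ :=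
  (1 / Real.sqrt (2 * Real.pi)) * ∫ x : ℝ, (f x : ℂ) * Complex.exp (-(Complex.I * w * x))

/-- The Fourier cosine coefficients of the auxiliary function `H`. -/
noncomputable def a : ℕ → ℝ
  | 0 => 3 / 4
  | 1 => 4 / (3 * Real.pi)
  | 2 => -(1 / 4)
  | k => -4 * Real.sin (k * Real.pi / 2) / (Real.pi * k * (k ^ 2 - 4))

/-- `A_n(λ) = -Σ_{k=1}^n a_k φ(λk)`. -/
noncomputable def An (φ : ℝ → ℝ) (lam : ℝ) (n : ℕ) : ℝ :=
  -∑ k ∈ Finset.Icc 1 n, a k * φ (lam * k)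

/-- `P_n(λ, x) = 2 A_n(λ) φ(x) + Σ_{k=1}^n a_k (φ(x + λk) + φ(x - λk))`. -/
noncomputable def Pn (φ : ℝ → ℝ) (lam : ℝ) (n : ℕ) (x : ℝ) : ℝ :=
  2 * An φ lam n * φ x +
    ∑ k ∈ Finset.Icc 1 n, a k * (φ (x + lam * k) + φ (x - lam * k))

/-!
For `|λω| ≤ π/2` we have `H(λω) = 1`, so the cosine series of `H` gives
`Σ_{k=1}^n a_k cos(kλω) = 1/4 - T(ω)` with the tail `T(ω) = Σ_{k>n} a_k cos(kλω)` bounded by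
`t = Σ_{k>n} |a_k|`. A translation multiplies the Fourier transform by a character, so on `[-r, r]`
`P̂_n(λ, ω) = 2 φ̂(ω) (A_n(λ) + Σ_{k=1}^n a_k cos(kλω)) = 2 φ̂(ω) (A_n(λ) + 1/4 - T(ω))`.
As `φ̂ ≥ 0`, the negative part of `P̂_n` is at most `2 t φ̂` when `A_n(λ) + 1/4 ≥ 0`, and the
positive part is otherwise. Fourier inversion at `0` gives `∫ φ̂ = √(2π) φ(0) = √(2π)`.
-/

open scoped FourierTransform

section CosineSeries

open intervalIntegral

lemma abs_a_add_three_le (k : ℕ) : |a (k + 3)| ≤ 1 / ((k : ℝ) + 3) ^ 2 := by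
  have ha : a (k + 3)
      = -4 * sin (((k : ℝ) + 3) * π / 2) / (π * (k + 3) * (((k : ℝ) + 3) ^ 2 - 4)) := by
    simp only [a]; push_cast; ring
  set x : ℝ := k + 3
  have hx : 3 ≤ x := by linarith [k.cast_nonneg (α := ℝ)]
  have hx4 : 0 < x ^ 2 - 4 := by nlinarith
  have hden : 0 < π * x * (x ^ 2 - 4) := by positivity
  rw [ha, abs_div, abs_of_pos hden, abs_mul, abs_neg, abs_of_pos four_pos,
    div_le_div_iff₀ hden (by positivity)]
  have hs := abs_sin_le_one (x * π / 2)
  calc 4 * |sin (x * π / 2)| * x ^ 2 ≤ 3 * x * (x ^ 2 - 4) := by nlinarith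
    _ ≤ 1 * (π * x * (x ^ 2 - 4)) := by nlinarith [pi_gt_three]

lemma summable_abs_a : Summable fun k => |a k| := by
  rw [← summable_nat_add_iff 3]
  refine .of_nonneg_of_le (fun _ => abs_nonneg _) abs_a_add_three_le ?_
  exact_mod_cast (summable_nat_add_iff 3).mpr (summable_one_div_nat_pow.mpr one_lt_two)

-- `H` as one closed formula: it is `1` where `cos ≥ 0` and `sin²` where `cos ≤ 0`.
noncomputable def H (x : ℝ) : ℝ := sin x ^ 2 + cos x * max (cos x) 0

lemma continuous_H : Continuous H := by unfold H; fun_prop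

lemma H_periodic : Function.Periodic H (2 * π) := by
  intro x; simp [H]

lemma H_neg (x : ℝ) : H (-x) = H x := by simp [H]

lemma H_eq_one {x : ℝ} (hx : 0 ≤ cos x) : H x = 1 := by
  rw [H, max_eq_left hx, ← sq, sin_sq_add_cos_sq]

lemma H_eq_sin_sq {x : ℝ} (hx : cos x ≤ 0) : H x = sin x ^ 2 := by
  rw [H, max_eq_right hx, mul_zero, add_zero]

lemma integral_of_even {f : ℝ → ℝ} (hf : Continuous f) (heven : ∀ x, f (-x) = f x)
    (b : ℝ) : ∫ x in -b..b, f x = 2 * ∫ x in 0..b, f x := by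
  have hleft : ∫ x in -b..0, f x = ∫ x in 0..b, f x := by
    simpa [heven] using (integral_comp_neg (a := 0) (b := b) f).symm
  rw [← integral_add_adjacent_intervals (hf.intervalIntegrable _ 0) (hf.intervalIntegrable 0 _),
    hleft, two_mul]

lemma integral_of_odd {f : ℝ → ℝ} (hodd : ∀ x, f (-x) = -f x) (b : ℝ) :
    ∫ x in -b..b, f x = 0 := by
  have h := integral_comp_neg (a := -b) (b := b) f
  simp only [hodd, intervalIntegral.integral_neg, neg_neg] at h
  linarith

lemma integral_cos_mul {c : ℝ} (hc : c ≠ 0) (s t : ℝ) :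
    ∫ x in s..t, cos (c * x) = (sin (c * t) - sin (c * s)) / c := by
  rw [integral_comp_mul_left cos hc, integral_cos, smul_eq_mul, inv_mul_eq_div]

noncomputable def cosMoment (c : ℝ) : ℝ := ∫ x in -π..π, cos (c * x) * H x

lemma cosMoment_neg (c : ℝ) : cosMoment (-c) = cosMoment c := by
  simp [cosMoment, neg_mul, cos_neg]

-- `H` is even, equals `1` on `[0, π/2]` and `sin²` on `[π/2, π]`, and
-- `cos (c x) sin² x = cos (c x) / 2 - cos ((c + 2) x) / 4 - cos ((c - 2) x) / 4`.
lemma cosMoment_eq_integrals_cos (c : ℝ) : cosMoment c = 2 * ((∫ x in 0..π / 2, cos (c * x))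
    + (∫ x in π / 2..π, cos (c * x)) / 2 - (∫ x in π / 2..π, cos ((c + 2) * x)) / 4
    - (∫ x in π / 2..π, cos ((c - 2) * x)) / 4) := by
  have hint : ∀ d s t : ℝ, IntervalIntegrable (fun x => cos (d * x)) MeasureTheory.volume s t :=
    fun d s t => (by fun_prop : Continuous fun x => cos (d * x)).intervalIntegrable s t
  have hcH : Continuous fun x => cos (c * x) * H x := by have := continuous_H; fun_prop
  rw [cosMoment, integral_of_even hcH (fun x => by rw [H_neg, mul_neg, cos_neg]),
    ← integral_add_adjacent_intervals (b := π / 2) (hcH.intervalIntegrable _ _)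
      (hcH.intervalIntegrable _ _)]
  have hmid : ∫ x in 0..π / 2, cos (c * x) * H x = ∫ x in 0..π / 2, cos (c * x) := by
    refine integral_congr fun x hx => ?_
    rw [Set.uIcc_of_le (by positivity)] at hx
    rw [H_eq_one (cos_nonneg_of_mem_Icc ⟨by linarith [hx.1, pi_pos], hx.2⟩), mul_one]
  have hside : ∫ x in π / 2..π, cos (c * x) * H x = ∫ x in π / 2..π,
      (cos (c * x) / 2 - cos ((c + 2) * x) / 4 - cos ((c - 2) * x) / 4) := by
    refine integral_congr fun x hx => ?_
    rw [Set.uIcc_of_le (by linarith [pi_pos])] at hx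
    rw [H_eq_sin_sq (cos_nonpos_of_pi_div_two_le_of_le hx.1 (by linarith [hx.2, pi_pos])),
      add_mul, sub_mul, cos_add, cos_sub, cos_two_mul, sin_two_mul, sin_sq]
    ring
  rw [hmid, hside, integral_sub (((hint _ _ _).div_const _).sub ((hint _ _ _).div_const _))
      ((hint _ _ _).div_const _),
    integral_sub ((hint _ _ _).div_const _) ((hint _ _ _).div_const _)]
  simp only [intervalIntegral.integral_div]
  ring

lemma cosMoment_natCast_of_ne {k : ℕ} (h0 : k ≠ 0) (h2 : k ≠ 2) :
    cosMoment k = -4 * sin (k * π / 2) / (k * (k ^ 2 - 4)) := by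
  have hk0 : (k : ℝ) ≠ 0 := by exact_mod_cast h0
  have hk2 : (k : ℝ) - 2 ≠ 0 := sub_ne_zero.mpr (by exact_mod_cast h2)
  have hk2' : (k : ℝ) + 2 ≠ 0 := by positivity
  have hsin_pi : ∀ m : ℕ, sin (m * π) = 0 := sin_nat_mul_pi
  have e1 : sin ((k + 2) * π) = 0 := by exact_mod_cast hsin_pi (k + 2)
  have e2 : sin ((k - 2) * π) = 0 := by rw [sub_mul, sin_sub_two_pi, hsin_pi]
  have e3 : sin ((k + 2) * (π / 2)) = -sin (k * π / 2) := by
    rw [← sin_add_pi]; ring_nf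
  have e4 : sin ((k - 2) * (π / 2)) = -sin (k * π / 2) := by
    rw [← sin_sub_pi]; ring_nf
  rw [cosMoment_eq_integrals_cos, integral_cos_mul hk0, integral_cos_mul hk0, integral_cos_mul hk2',
    integral_cos_mul hk2, e1, e2, e3, e4, hsin_pi, mul_zero, sin_zero, mul_div_assoc',
    show (k : ℝ) ^ 2 - 4 = (k - 2) * (k + 2) by ring]
  field_simp
  ring

lemma integral_cos_even_nat_mul_eq_zero {m : ℕ} (hm : m ≠ 0) :
    ∫ x in π / 2..π, cos (2 * m * x) = 0 := by
  rw [integral_cos_mul (by positivity), show 2 * m * π = ((2 * m : ℕ) : ℝ) * π by push_cast; ring,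
    show 2 * m * (π / 2) = m * π by ring, sin_nat_mul_pi, sin_nat_mul_pi, sub_zero, zero_div]

lemma cosMoment_zero : cosMoment 0 = 2 * π * a 0 := by
  have h2 : ∫ x in π / 2..π, cos (2 * x) = 0 := by
    simpa using integral_cos_even_nat_mul_eq_zero one_ne_zero
  rw [cosMoment_eq_integrals_cos, zero_add, zero_sub]
  simp only [zero_mul, neg_mul, cos_neg, cos_zero, h2, intervalIntegral.integral_const, smul_eq_mul]
  rw [show a 0 = 3 / 4 from rfl]
  ring

lemma cosMoment_two : cosMoment 2 = π * a 2 := by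
  have h2 : ∫ x in π / 2..π, cos (2 * x) = 0 := by
    simpa using integral_cos_even_nat_mul_eq_zero one_ne_zero
  have h4 : ∫ x in π / 2..π, cos ((2 + 2) * x) = 0 := by
    convert integral_cos_even_nat_mul_eq_zero two_ne_zero using 4; norm_num
  rw [cosMoment_eq_integrals_cos, integral_cos_mul two_ne_zero, h2, h4, sub_self]
  simp only [zero_mul, cos_zero, intervalIntegral.integral_const, smul_eq_mul]
  rw [show a 2 = -(1 / 4) from rfl, show 2 * (π / 2) = π by ring, sin_pi, mul_zero, sin_zero]
  ring

lemma cosMoment_natCast {k : ℕ} (hk : k ≠ 0) : cosMoment k = π * a k := by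
  match k, hk with
  | 1, _ =>
    rw [cosMoment_natCast_of_ne one_ne_zero (by norm_num), show a 1 = 4 / (3 * π) from rfl]
    norm_num [pi_ne_zero]
    field_simp
  | 2, _ => exact_mod_cast cosMoment_two
  | m + 3, _ =>
    rw [cosMoment_natCast_of_ne (by omega) (by omega)]
    simp only [a]
    field_simp

instance : Fact (0 < 2 * π) := ⟨by positivity⟩

noncomputable def HCircle : C(AddCircle (2 * π), ℂ) :=
  ⟨(H_periodic.comp ((↑) : ℝ → ℂ)).lift,
    continuous_coinduced_dom.mpr (Complex.continuous_ofReal.comp continuous_H)⟩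

lemma HCircle_coe (x : ℝ) : HCircle x = H x := rfl

lemma fourier_coe_two_pi (j : ℤ) (x : ℝ) :
    fourier j (x : AddCircle (2 * π)) = Complex.exp (↑(j * x) * Complex.I) := by
  rw [fourier_coe_apply]
  congr 1
  push_cast
  field_simp

lemma fourierCoeff_HCircle (j : ℤ) : fourierCoeff HCircle j = ↑(cosMoment j / (2 * π)) := by
  have hint : ∀ g : ℝ → ℝ, Continuous g →
      IntervalIntegrable (fun x => ((g x * H x : ℝ) : ℂ)) MeasureTheory.volume (-π) π :=
    fun g hg => (by have := continuous_H; fun_prop : Continuous _).intervalIntegrable _ _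
  have hodd : ∫ x in -π..π, sin (j * x) * H x = 0 :=
    integral_of_odd (fun x => by rw [H_neg, mul_neg, sin_neg, neg_mul]) π
  rw [fourierCoeff_eq_intervalIntegral _ j (-π), show -π + 2 * π = π by ring]
  have hterm : ∀ x : ℝ, fourier (-j) (x : AddCircle (2 * π)) • HCircle x
      = ((cos (j * x) * H x : ℝ) : ℂ) - ((sin (j * x) * H x : ℝ) : ℂ) * Complex.I := by
    intro x
    rw [fourier_coe_two_pi, HCircle_coe, smul_eq_mul, Complex.exp_mul_I]
    push_cast
    rw [neg_mul, Complex.cos_neg, Complex.sin_neg]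
    ring
  simp_rw [hterm]
  rw [integral_sub (hint _ (by fun_prop)) ((hint _ (by fun_prop)).mul_const _),
    intervalIntegral.integral_mul_const, integral_ofReal, integral_ofReal, hodd, ← cosMoment]
  push_cast
  rw [Complex.real_smul]
  push_cast
  ring

-- The coefficients are absolutely summable, so the Fourier series of the continuous `H` converges
-- to `H` pointwise; pairing the modes `±k` turns it into the cosine series.
lemma hasSum_a_mul_cos (θ : ℝ) : HasSum (fun k : ℕ => a k * cos (k * θ)) (H θ) := by
  have hcoeff_nat : ∀ k : ℕ, k ≠ 0 → cosMoment k / (2 * π) = a k / 2 := fun k hk => by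
    rw [cosMoment_natCast hk]; field_simp
  have hsum_nat : Summable fun k : ℕ => cosMoment k / (2 * π) := by
    rw [← summable_nat_add_iff 1]
    refine ((summable_nat_add_iff 1).mpr (summable_abs_iff.mp summable_abs_a)).div_const 2
      |>.congr fun k => (hcoeff_nat (k + 1) k.succ_ne_zero).symm
  have hsum : Summable (fourierCoeff HCircle) := by
    rw [funext fourierCoeff_HCircle]
    refine Complex.summable_ofReal.mpr (.of_nat_of_neg hsum_nat ?_)
    exact hsum_nat.congr fun k => by rw [Int.cast_neg, Int.cast_natCast, cosMoment_neg]
  have hre := Complex.reCLM.hasSum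
    (has_pointwise_sum_fourier_series_of_summable hsum (θ : AddCircle (2 * π)))
  simp only [Complex.reCLM_apply, HCircle_coe, fourierCoeff_HCircle, fourier_coe_two_pi,
    smul_eq_mul, Complex.re_ofReal_mul, Complex.exp_ofReal_mul_I_re, Complex.ofReal_re] at hre
  have hzero : cosMoment 0 / (2 * π) = a 0 := by
    rw [cosMoment_zero]; field_simp
  have hpair := hre.nat_add_neg.sub (hasSum_ite_eq 0 (a 0))
  rw [Int.cast_zero, hzero, zero_mul, cos_zero, mul_one, add_sub_cancel_right] at hpair
  refine hpair.congr_fun fun k => ?_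
  rw [Int.cast_neg, Int.cast_natCast, cosMoment_neg, neg_mul, cos_neg]
  rcases eq_or_ne k 0 with rfl | hk
  · simp [hzero]
  · rw [if_neg hk, hcoeff_nat k hk]; ring

lemma sum_Icc_a_mul_cos_eq {θ : ℝ} (hθ : 0 ≤ cos θ) (n : ℕ) :
    ∑ k ∈ Finset.Icc 1 n, a k * cos (k * θ)
      = 1 / 4 - ∑' m, a (n + 1 + m) * cos ((n + 1 + m : ℕ) * θ) := by
  have h := hasSum_a_mul_cos θ
  rw [H_eq_one hθ] at h
  have hsplit := h.summable.sum_add_tsum_nat_add (n + 1)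
  rw [h.tsum_eq, Finset.range_eq_Ico, Finset.sum_eq_sum_Ico_succ_bot (by omega : 0 < n + 1),
    zero_add, Finset.Ico_add_one_right_eq_Icc] at hsplit
  simp_rw [add_comm _ (n + 1)] at hsplit
  rw [show a 0 = 3 / 4 from rfl, Nat.cast_zero, zero_mul, cos_zero] at hsplit
  linarith

lemma abs_tsum_mul_cos_le {b : ℕ → ℝ} (hb : Summable fun m => |b m|) (c : ℕ → ℝ) :
    |∑' m, b m * cos (c m)| ≤ ∑' m, |b m| :=
  tsum_of_norm_bounded (f := fun m => b m * cos (c m)) hb.hasSum fun m => by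
    rw [Real.norm_eq_abs, abs_mul]
    exact mul_le_of_le_one_right (abs_nonneg _) (abs_cos_le_one _)

end CosineSeries

section FourierTransform

lemma integrable_FT_integrand {f : ℝ → ℝ} (hf : Integrable f) (w : ℝ) :
    Integrable fun x => (f x : ℂ) * Complex.exp (-(Complex.I * w * x)) := by
  refine hf.ofReal.mul_bdd (c := 1) (by fun_prop) (.of_forall fun x => ?_)
  rw [show -(Complex.I * w * x) = ↑(-(w * x)) * Complex.I by push_cast; ring,
    Complex.norm_exp_ofReal_mul_I]

lemma FT_add {f g : ℝ → ℝ} (hf : Integrable f) (hg : Integrable g) (w : ℝ) :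
    FT (fun x => f x + g x) w = FT f w + FT g w := by
  simp only [FT, Complex.ofReal_add, add_mul]
  rw [integral_add (integrable_FT_integrand hf w) (integrable_FT_integrand hg w), mul_add]

lemma FT_const_mul (c : ℝ) (f : ℝ → ℝ) (w : ℝ) : FT (fun x => c * f x) w = c * FT f w := by
  simp only [FT, Complex.ofReal_mul, mul_assoc, integral_const_mul]
  ring

lemma FT_finsetSum {ι : Type*} (s : Finset ι) {F : ι → ℝ → ℝ} (hF : ∀ i ∈ s, Integrable (F i))
    (w : ℝ) : FT (fun x => ∑ i ∈ s, F i x) w = ∑ i ∈ s, FT (F i) w := by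
  simp only [FT, Complex.ofReal_sum, Finset.sum_mul]
  rw [integral_finsetSum s fun i hi => integrable_FT_integrand (hF i hi) w, Finset.mul_sum]

lemma FT_comp_add_right (f : ℝ → ℝ) (s w : ℝ) :
    FT (fun x => f (x + s)) w = Complex.exp (Complex.I * w * s) * FT f w := by
  set G : ℝ → ℂ := fun y =>
    (f y : ℂ) * Complex.exp (-(Complex.I * w * y)) * Complex.exp (Complex.I * w * s)
  have hshift : ∀ x : ℝ, (f (x + s) : ℂ) * Complex.exp (-(Complex.I * w * x)) = G (x + s) := by
    intro x
    simp only [G, mul_assoc, ← Complex.exp_add]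
    push_cast
    ring_nf
  simp only [FT, hshift, integral_add_right_eq_self (μ := volume) G s, G, integral_mul_const]
  ring

lemma FT_comp_add_add_comp_sub {f : ℝ → ℝ} (hf : Integrable f) (s w : ℝ) :
    FT (fun x => f (x + s) + f (x - s)) w = ↑(2 * cos (w * s)) * FT f w := by
  simp_rw [sub_eq_add_neg]
  rw [FT_add (hf.comp_add_right s) (hf.comp_add_right (-s)), FT_comp_add_right, FT_comp_add_right,
    ← add_mul]
  congr 1
  push_cast
  rw [Complex.two_cos]
  ring_nf

lemma integrable_Pn {φ : ℝ → ℝ} (hφ : Integrable φ) (lam : ℝ) (n : ℕ) : Integrable (Pn φ lam n) :=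
  (hφ.const_mul _).add <| integrable_finsetSum _ fun _ _ =>
    ((hφ.comp_add_right _).add (hφ.comp_sub_right _)).const_mul _

lemma FT_Pn {φ : ℝ → ℝ} (hφ : Integrable φ) (lam : ℝ) (n : ℕ) (w : ℝ) :
    FT (Pn φ lam n) w
      = ↑(2 * (An φ lam n + ∑ k ∈ Finset.Icc 1 n, a k * cos (k * (lam * w)))) * FT φ w := by
  have hterm : ∀ k ∈ Finset.Icc 1 n,
      Integrable fun x => a k * (φ (x + lam * k) + φ (x - lam * k)) :=
    fun k _ => ((hφ.comp_add_right _).add (hφ.comp_sub_right _)).const_mul _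
  unfold Pn
  rw [FT_add (hφ.const_mul _) (integrable_finsetSum _ hterm), FT_const_mul,
    FT_finsetSum _ hterm]
  simp_rw [FT_const_mul, FT_comp_add_add_comp_sub hφ]
  push_cast
  rw [mul_add, add_mul, Finset.mul_sum, Finset.sum_mul]
  congr 1
  refine Finset.sum_congr rfl fun k _ => ?_
  ring_nf

lemma FT_eq_fourier (f : ℝ → ℝ) (w : ℝ) :
    FT f w = ((√(2 * π))⁻¹ : ℝ) * 𝓕 (fun x => (f x : ℂ)) (w / (2 * π)) := by
  rw [Real.fourier_real_eq_integral_exp_smul, FT, one_div, Complex.ofReal_inv]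
  congr 1
  refine integral_congr_ae (.of_forall fun x => ?_)
  dsimp only
  rw [smul_eq_mul, mul_comm]
  congr 2
  push_cast
  field_simp

lemma continuous_FT {f : ℝ → ℝ} (hf : Integrable f) : Continuous (FT f) := by
  have h𝓕 : Continuous (𝓕 fun x => (f x : ℂ)) :=
    VectorFourier.fourierIntegral_continuous continuous_fourierChar
      (by simp only [innerₗ_apply_apply]; exact continuous_inner) hf.ofReal
  rw [funext (FT_eq_fourier f)]
  fun_prop

lemma integral_FT {f : ℝ → ℝ} (hf : Integrable f) (hcont : Continuous f) (hFT : Integrable (FT f)) :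
    ∫ w, FT f w = ↑(√(2 * π) * f 0) := by
  have h2π : 2 * π ≠ 0 := by positivity
  have hsqrt : (√(2 * π) : ℂ) ≠ 0 := by exact_mod_cast (Real.sqrt_pos.mpr (by positivity)).ne'
  rw [funext (FT_eq_fourier f)] at hFT ⊢
  have h𝓕 : Integrable (𝓕 fun x => (f x : ℂ)) := by
    refine (integrable_comp_div_iff _ h2π).mp ((integrable_const_mul_iff ?_ _).mp hFT)
    exact isUnit_iff_ne_zero.mpr (by push_cast; exact inv_ne_zero hsqrt)
  have hinv := hf.ofReal.fourierInv_fourier_eq h𝓕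
    (Complex.continuous_ofReal.comp hcont).continuousAt (v := 0)
  rw [Real.fourierInv_eq] at hinv
  simp only [inner_zero_right, AddChar.map_zero_eq_one, one_smul] at hinv
  rw [integral_const_mul, Measure.integral_comp_div (𝓕 fun x => (f x : ℂ)), hinv,
    abs_of_pos (by positivity), Complex.real_smul]
  push_cast
  field_simp
  rw [← Complex.ofReal_pow, Real.sq_sqrt (by positivity)]
  push_cast
  ring

lemma integral_re_FT_le {f : ℝ → ℝ} (hf : Integrable f) (hcont : Continuous f)
    (hFT_nonneg : ∀ w, 0 ≤ (FT f w).re) (hFT : Integrable (FT f)) {α β : ℝ} (hαβ : α ≤ β) :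
    ∫ w in α..β, (FT f w).re ≤ √(2 * π) * f 0 := by
  rw [intervalIntegral.integral_of_le hαβ]
  refine (setIntegral_le_integral hFT.re (.of_forall hFT_nonneg)).trans_eq ?_
  rw [integral_re hFT, integral_FT hf hcont hFT]
  exact Complex.ofReal_re _

end FourierTransform

lemma re_FT_Pn_eq {φ : ℝ → ℝ} (hφ : Integrable φ) {lam w : ℝ} (hw : 0 ≤ cos (lam * w)) (n : ℕ) :
    (FT (Pn φ lam n) w).re = 2 * (FT φ w).re
      * (An φ lam n + 1 / 4 - ∑' m, a (n + 1 + m) * cos ((n + 1 + m : ℕ) * (lam * w))) := by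
  rw [FT_Pn hφ, Complex.re_ofReal_mul, sum_Icc_a_mul_cos_eq hw]
  ring

lemma min_integral_negPart_posPart_le {G g T : ℝ → ℝ} {α β c t : ℝ} (hαβ : α ≤ β)
    (hG : Continuous G) (hg : Continuous g) (hG_eq : ∀ w ∈ Set.Icc α β, G w = g w * (c - T w))
    (hg_nonneg : ∀ w ∈ Set.Icc α β, 0 ≤ g w) (hT : ∀ w ∈ Set.Icc α β, |T w| ≤ t) :
    min (∫ w in α..β, max (-G w) 0) (∫ w in α..β, max (G w) 0) ≤ t * ∫ w in α..β, g w := by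
  have hbound : ∀ F : ℝ → ℝ, Continuous F → (∀ w ∈ Set.Icc α β, F w ≤ t * g w) →
      ∫ w in α..β, max (F w) 0 ≤ t * ∫ w in α..β, g w := by
    intro F hF hFle
    rw [← intervalIntegral.integral_const_mul]
    refine intervalIntegral.integral_mono_on hαβ ((hF.max continuous_const).intervalIntegrable _ _)
      ((continuous_const.mul hg).intervalIntegrable _ _) fun w hw => max_le (hFle w hw) ?_
    exact mul_nonneg ((abs_nonneg _).trans (hT w hw)) (hg_nonneg w hw)
  rcases le_or_gt 0 c with hc | hc
  · refine (min_le_left _ _).trans (hbound _ hG.neg fun w hw => ?_)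
    have := (abs_le.mp (hT w hw)).2
    rw [hG_eq w hw]
    nlinarith [hg_nonneg w hw]
  · refine (min_le_right _ _).trans (hbound _ hG fun w hw => ?_)
    have := (abs_le.mp (hT w hw)).1
    rw [hG_eq w hw]
    nlinarith [hg_nonneg w hw]

theorem min_signed_mass_of_Pn_hat_small_general
    (φ : ℝ → ℝ) (hcont : Continuous φ)
    (hint : Integrable φ) (hφ0 : φ 0 = 1)
    (hFTnonneg : ∀ w : ℝ, 0 ≤ (FT φ w).re)
    (hFTint : Integrable (FT φ))
    (lam : ℝ) (hlam : 0 < lam) (n : ℕ)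
    (r : ℝ) (hr0 : 0 < r) (hr : r ≤ Real.pi / (2 * lam)) :
    min (∫ w in (-r)..r, max (-(FT (Pn φ lam n) w).re) 0)
        (∫ w in (-r)..r, max ((FT (Pn φ lam n) w).re) 0) ≤
      4 * Real.sqrt (2 * Real.pi) * ∑' k : ℕ, |a (n + 1 + k)| := by
  have htail : Summable fun k => |a (n + 1 + k)| :=
    ((summable_nat_add_iff (n + 1)).mpr summable_abs_a).congr fun k => by rw [add_comm]
  have hlr : lam * r ≤ π / 2 := by
    rw [le_div_iff₀ (by positivity)] at hr
    linarith
  have hcos : ∀ w ∈ Set.Icc (-r) r, 0 ≤ cos (lam * w) := fun w hw =>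
    cos_nonneg_of_mem_Icc ⟨by nlinarith [hw.1], by nlinarith [hw.2]⟩
  have hmass := integral_re_FT_le hint hcont hFTnonneg hFTint (by linarith : -r ≤ r)
  rw [hφ0, mul_one] at hmass
  set t := ∑' k, |a (n + 1 + k)|
  have ht : 0 ≤ t := tsum_nonneg fun k => abs_nonneg _
  calc _ ≤ t * ∫ w in -r..r, 2 * (FT φ w).re :=
        min_integral_negPart_posPart_le (G := fun w => (FT (Pn φ lam n) w).re) (by linarith)
          (Complex.continuous_re.comp (continuous_FT (integrable_Pn hint lam n)))
          (continuous_const.mul (Complex.continuous_re.comp (continuous_FT hint)))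
          (fun w hw => re_FT_Pn_eq hint (hcos w hw) n)
          (fun w _ => mul_nonneg zero_le_two (hFTnonneg w))
          (fun w _ => abs_tsum_mul_cos_le htail _)
    _ = 2 * t * ∫ w in -r..r, (FT φ w).re := by rw [intervalIntegral.integral_const_mul]; ring
    _ ≤ 2 * t * √(2 * π) := by gcongr
    _ ≤ 4 * √(2 * π) * t := by nlinarith [sqrt_nonneg (2 * π)]

theorem min_signed_mass_of_Pn_hat_small
    (φ : ℝ → ℝ) (heven : ∀ x, φ (-x) = φ x) (hcont : Continuous φ)
    (hint : Integrable φ) (hφ0 : φ 0 = 1)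
    (hFTreal : ∀ w : ℝ, (FT φ w).im = 0)
    (hFTnonneg : ∀ w : ℝ, 0 ≤ (FT φ w).re)
    (hFTint : Integrable (FT φ))
    (hFTanalytic : AnalyticOnNhd ℝ (fun w => (FT φ w).re) Set.univ)
    (lam : ℝ) (hlam : 0 < lam) (n : ℕ) (hn : 0 < n)
    (r : ℝ) (hr0 : 0 < r) (hr : r ≤ Real.pi / (2 * lam)) :
    min (∫ w in (-r)..r, max (-(FT (Pn φ lam n) w).re) 0)
        (∫ w in (-r)..r, max ((FT (Pn φ lam n) w).re) 0) ≤
      4 * Real.sqrt (2 * Real.pi) * ∑' k : ℕ, |a (n + 1 + k)| :=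
  min_signed_mass_of_Pn_hat_small_general φ hcont hint hφ0 hFTnonneg hFTint lam hlam n r hr0 hr
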